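/- arXiv:0910.0110 — 4 statements merged into one kernel-verified Lean document; each statement's English description precedes it below -/
import Mathlib

section
/- Let G=(V,W,E) be a label cover instance with m edges in which some label assignment ℓ:V∪W→L satisfies every edge. Then in the StackSP instance produced by the reduction, the pricing that sets p(e_{i,κ,λ})=2 when κ=ℓ(v_i) and λ=ℓ(w_i), and p(e_{i,κ,λ})=+∞ otherwise, yields revenue exactly 2m: a minimum-cost s-t path uses the priced-2 pricable edge in every one of the m gadgets. -/
open scoped ENNReal

/-! ## Label cover instances -/

/-- A label cover instance: a bipartite graph `(V, W, E)` with edge list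
`(ve i, we i)` for `i : Fin m`, a label set `Fin k`, and for every edge `i` a
nonempty set `R i` of satisfying label pairs. -/
structure LabelCover where
  V : Type
  W : Type
  m : ℕ
  k : ℕ
  ve : Fin m → V
  we : Fin m → W
  R : Fin m → Finset (Fin k × Fin k)
  R_nonempty : ∀ i, (R i).Nonempty

namespace LabelCover

/-- The label assignment `(ℓv, ℓw)` satisfies edge `i`. -/
def Sat (I : LabelCover) (ℓv : I.V → Fin I.k) (ℓw : I.W → Fin I.k) (i : Fin I.m) : Prop :=
  (ℓv (I.ve i), ℓw (I.we i)) ∈ I.R i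

instance (I : LabelCover) (ℓv : I.V → Fin I.k) (ℓw : I.W → Fin I.k) :
    DecidablePred (I.Sat ℓv ℓw) := fun i =>
  decidable_of_iff ((ℓv (I.ve i), ℓw (I.we i)) ∈ I.R i) Iff.rfl

/-- The number of edges satisfied by the assignment `(ℓv, ℓw)`. -/
def satCount (I : LabelCover) (ℓv : I.V → Fin I.k) (ℓw : I.W → Fin I.k) : ℕ :=
  (Finset.univ.filter (I.Sat ℓv ℓw)).card

/-- The label pairs `a` on edge `i` and `b` on edge `j` are conflicting. -/
def Conflict (I : LabelCover) (i j : Fin I.m) (a b : Fin I.k × Fin I.k) : Prop :=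
  (I.ve i = I.ve j ∧ a.1 ≠ b.1) ∨ (I.we i = I.we j ∧ a.2 ≠ b.2)

/-! ## The StackSP instance produced by the reduction -/

/-- The nodes of the StackSP instance: the gadget boundary nodes `bd i`
(`bd i.castSucc` is the left endpoint of gadget `i`, `bd i.succ` its right
endpoint; `bd 0 = s`, `bd (last m) = t`), and for every gadget `i` and label
pair `a` the tail `tl i a` and head `hd i a` of the pricable edge `e_{i,a}`. -/
inductive Node (m k : ℕ) where
  | bd (i : Fin (m + 1))
  | tl (i : Fin m) (a : Fin k × Fin k)
  | hd (i : Fin m) (a : Fin k × Fin k)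
  deriving DecidableEq

/-- The edges of the StackSP instance: for every gadget `i` and label pair `a`,
the (fixed-cost 0) edge `enter i a` from the left endpoint of gadget `i` to the
tail of the pricable edge `price i a`, the pricable edge itself, and the
(fixed-cost 0) edge `exit i a` from its head to the right endpoint of gadget `i`;
the parallel fixed-cost-2 edge `skip i` of gadget `i`; and the shortcut edge
`shortcut i j a b` of fixed cost `j - i - 1` from the head of `price i a` to
the tail of `price j b`. -/
inductive Edge (m k : ℕ) where
  | enter (i : Fin m) (a : Fin k × Fin k)
  | price (i : Fin m) (a : Fin k × Fin k)
  | exit (i : Fin m) (a : Fin k × Fin k)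
  | skip (i : Fin m)
  | shortcut (i j : Fin m) (a b : Fin k × Fin k)
  deriving DecidableEq

namespace Edge

/-- Source node of an edge (all edges are directed from left to right). -/
def src {m k : ℕ} : Edge m k → Node m k
  | enter i _ => .bd i.castSucc
  | price i a => .tl i a
  | exit i a => .hd i a
  | skip i => .bd i.castSucc
  | shortcut i _ a _ => .hd i a

/-- Destination node of an edge. -/
def dst {m k : ℕ} : Edge m k → Node m k
  | enter i a => .tl i a
  | price i a => .hd i a
  | exit i _ => .bd i.succ
  | skip i => .bd i.succ
  | shortcut _ j _ b => .tl j b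

/-- The pricable edges. -/
def IsPricable {m k : ℕ} : Edge m k → Prop
  | price _ _ => True
  | _ => False

/-- The fixed cost of an edge: `2` for the parallel fixed edge of a gadget,
`j - i - 1` for a shortcut from gadget `i` to gadget `j`, `0` otherwise
(pricable edges have fixed cost `0`). -/
noncomputable def fixedCost {m k : ℕ} : Edge m k → ℝ≥0∞
  | skip _ => 2
  | shortcut i j _ _ => (((j : ℕ) - (i : ℕ) - 1 : ℕ) : ℝ≥0∞)
  | _ => 0

/-- Whether an edge is a pricable edge of gadget `g` (as a `Bool`). -/
def isPricableOf {m k : ℕ} (g : Fin m) : Edge m k → Bool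
  | price i _ => i == g
  | _ => false

end Edge

/-- The edges actually present in the StackSP instance built from `I`:
gadget `i` has edges only for the label pairs in `R i`, and a shortcut from
gadget `i` to gadget `j` exists precisely when `i < j` and the corresponding
label pairs are conflicting. -/
def EdgeOK (I : LabelCover) : Edge I.m I.k → Prop
  | .enter i a => a ∈ I.R i
  | .price i a => a ∈ I.R i
  | .exit i a => a ∈ I.R i
  | .skip _ => True
  | .shortcut i j a b =>
      (i : ℕ) < (j : ℕ) ∧ a ∈ I.R i ∧ b ∈ I.R j ∧ I.Conflict i j a b

/-- A pricing assigns a nonnegative (possibly infinite) price to every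
pricable edge `e_{i,a}`. -/
abbrev Pricing (I : LabelCover) := Fin I.m → Fin I.k × Fin I.k → ℝ≥0∞

/-- The price contributed by an edge (the price of a pricable edge, `0` for a
fixed-cost edge). -/
noncomputable def priceOf (I : LabelCover) (p : Pricing I) : Edge I.m I.k → ℝ≥0∞
  | .price i a => p i a
  | _ => 0

/-- The total cost of an edge: fixed cost plus price. -/
noncomputable def edgeCost (I : LabelCover) (p : Pricing I) (e : Edge I.m I.k) : ℝ≥0∞ :=
  e.fixedCost + I.priceOf p e

/-- Directed walks in the StackSP instance of `I`, recorded as lists of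
consecutive valid edges. -/
inductive Walk (I : LabelCover) : Node I.m I.k → Node I.m I.k → List (Edge I.m I.k) → Prop
  | nil (u : Node I.m I.k) : Walk I u u []
  | cons {e : Edge I.m I.k} {v : Node I.m I.k} {es : List (Edge I.m I.k)} :
      I.EdgeOK e → Walk I e.dst v es → Walk I e.src v (e :: es)

/-- The source `s` of the instance: the left endpoint of gadget `1`. -/
def source (I : LabelCover) : Node I.m I.k := .bd 0

/-- The sink `t` of the instance: the right endpoint of gadget `m`. -/
def target (I : LabelCover) : Node I.m I.k := .bd (Fin.last I.m)

/-- Total cost (fixed costs plus prices) of a list of edges. -/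
noncomputable def cost (I : LabelCover) (p : Pricing I) (es : List (Edge I.m I.k)) : ℝ≥0∞ :=
  (es.map (I.edgeCost p)).sum

/-- Revenue of a list of edges: the sum of the prices of its pricable edges. -/
noncomputable def revenue (I : LabelCover) (p : Pricing I) (es : List (Edge I.m I.k)) : ℝ≥0∞ :=
  (es.map (I.priceOf p)).sum

/-- Total fixed cost of a list of edges. -/
noncomputable def fixedSum (I : LabelCover) (es : List (Edge I.m I.k)) : ℝ≥0∞ :=
  (es.map Edge.fixedCost).sum

/-- `P` is a minimum-cost directed `s`-`t` path under pricing `p`. -/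
def IsOptPath (I : LabelCover) (p : Pricing I) (P : List (Edge I.m I.k)) : Prop :=
  Walk I I.source I.target P ∧
    ∀ Q, Walk I I.source I.target Q → I.cost p P ≤ I.cost p Q

/-- `P` is the path purchased by the consumer: a minimum-cost `s`-`t` path
which, among minimum-cost paths, maximizes the revenue. -/
def IsPurchased (I : LabelCover) (p : Pricing I) (P : List (Edge I.m I.k)) : Prop :=
  I.IsOptPath p P ∧ ∀ Q, I.IsOptPath p Q → I.revenue p Q ≤ I.revenue p P

/-! ## P-edges, significant gadgets and islands -/

/-- Gadget `g` has a P-edge, i.e. `P` uses a pricable edge of gadget `g`. -/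
def HasPEdge (I : LabelCover) (P : List (Edge I.m I.k)) (g : Fin I.m) : Prop :=
  ∃ a, Edge.price g a ∈ P

/-- Gadget `g'` has a P-edge that is joined to the P-edge `e_{g,a}` of gadget
`g` by a shortcut edge (in particular `g < g'`). -/
def Linked (I : LabelCover) (P : List (Edge I.m I.k)) (g : Fin I.m)
    (a : Fin I.k × Fin I.k) (g' : Fin I.m) : Prop :=
  ∃ b, Edge.price g' b ∈ P ∧ I.EdgeOK (.shortcut g g' a b)

/-- Every pricable edge not on `P` has price `+∞` (the w.l.o.g. normalization). -/
def OffPathInfty (I : LabelCover) (p : Pricing I) (P : List (Edge I.m I.k)) : Prop :=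
  ∀ g a, Edge.price g a ∉ P → p g a = ⊤

/-- The length `in_g` of the shortcut edge used by `P` to enter gadget `g`
(`0` if no shortcut is used). -/
noncomputable def inLen (I : LabelCover) (P : List (Edge I.m I.k)) (g : Fin I.m) : ℕ :=
  if h : ∃ g' : Fin I.m, ∃ a b, Edge.shortcut g' g a b ∈ P then
    (g : ℕ) - (h.choose : ℕ) - 1
  else 0

/-- The length `out_g` of the shortcut edge used by `P` to exit gadget `g`
(`0` if no shortcut is used). -/
noncomputable def outLen (I : LabelCover) (P : List (Edge I.m I.k)) (g : Fin I.m) : ℕ :=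
  if h : ∃ g' : Fin I.m, ∃ a b, Edge.shortcut g g' a b ∈ P then
    (h.choose : ℕ) - (g : ℕ) - 1
  else 0

/-- `P` splits as `P1 ++ M ++ P2` where `P1` goes from `s` to `u`, `M` from `u`
to `v` and `P2` from `v` to `t`. -/
def SplitsAt (I : LabelCover) (P P1 M P2 : List (Edge I.m I.k))
    (u v : Node I.m I.k) : Prop :=
  P = P1 ++ M ++ P2 ∧ Walk I I.source u P1 ∧ Walk I u v M ∧ Walk I v I.target P2

/-- The sequence `σ 0 < σ 1 < … < σ (r-1)` of significant gadgets of the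
purchased path `P`, together with the labels of their P-edges:
`σ 0` is the first gadget with a P-edge; given `σ i`, if some gadget beyond
`σ i` has a P-edge joined to the P-edge of `σ i` by a shortcut edge then
`σ (i+1)` is the largest such gadget, and otherwise `σ i` is an end point and
`σ (i+1)` is the next gadget after `σ i` having a P-edge; the process stops at
`σ (r-1)`, which is an end point, with no P-edge beyond it. -/
structure SigSeq (I : LabelCover) (P : List (Edge I.m I.k)) where
  r : ℕ
  rpos : 0 < r
  σ : Fin r → Fin I.m
  lab : Fin r → Fin I.k × Fin I.k
  mono : StrictMono σ
  mem : ∀ i, Edge.price (σ i) (lab i) ∈ P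
  first : ∀ g, I.HasPEdge P g → σ ⟨0, rpos⟩ ≤ g
  step : ∀ i : ℕ, ∀ h : i + 1 < r,
    (I.Linked P (σ ⟨i, Nat.lt_of_succ_lt h⟩) (lab ⟨i, Nat.lt_of_succ_lt h⟩) (σ ⟨i + 1, h⟩) ∧
      ∀ g, I.Linked P (σ ⟨i, Nat.lt_of_succ_lt h⟩) (lab ⟨i, Nat.lt_of_succ_lt h⟩) g →
        g ≤ σ ⟨i + 1, h⟩) ∨
    ((¬ ∃ g, I.Linked P (σ ⟨i, Nat.lt_of_succ_lt h⟩) (lab ⟨i, Nat.lt_of_succ_lt h⟩) g) ∧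
      I.HasPEdge P (σ ⟨i + 1, h⟩) ∧
      ∀ g, σ ⟨i, Nat.lt_of_succ_lt h⟩ < g → I.HasPEdge P g → σ ⟨i + 1, h⟩ ≤ g)
  last : ¬ ∃ g, I.Linked P (σ ⟨r - 1, by omega⟩) (lab ⟨r - 1, by omega⟩) g
  cover : ∀ g, I.HasPEdge P g → g ≤ σ ⟨r - 1, by omega⟩

/-- Significant gadget `σ i` is an end point: no gadget has a P-edge joined to
the P-edge of `σ i` by a shortcut edge. -/
def SigSeq.IsEnd {I : LabelCover} {P : List (Edge I.m I.k)} (S : I.SigSeq P)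
    (i : Fin S.r) : Prop :=
  ¬ ∃ g, I.Linked P (S.σ i) (S.lab i) g

/-- Significant gadget `σ i` is a start point: it is the first significant
gadget, or its predecessor is an end point. -/
def SigSeq.IsStart {I : LabelCover} {P : List (Edge I.m I.k)} (S : I.SigSeq P)
    (i : Fin S.r) : Prop :=
  (i : ℕ) = 0 ∨ (0 < (i : ℕ) ∧ ∃ h : (i : ℕ) - 1 < S.r, S.IsEnd ⟨(i : ℕ) - 1, h⟩)

/-- `σ α, …, σ ω` is an island: `α` is a start point, `ω` is the next end
point after `α`. -/
def SigSeq.IsIsland {I : LabelCover} {P : List (Edge I.m I.k)} (S : I.SigSeq P)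
    (α ω : Fin S.r) : Prop :=
  α ≤ ω ∧ S.IsStart α ∧ S.IsEnd ω ∧ ∀ i : Fin S.r, α ≤ i → i < ω → ¬ S.IsEnd i

end LabelCover

open LabelCover

/-
A selected pair `av i ∈ R i` in each gadget, no two of which conflict, is priced `2`; all
other pricable edges are priced `+∞`. The path through the selected edges costs `2m`, all of
it revenue. Conversely, the node potential that is `2i` at the left endpoint of gadget `i`
grows by at most the cost of each edge, because a shortcut into a selected edge can only leave
an unselected (infinitely priced) one; hence every `s`-`t` path costs at least `2m`, and the
revenue of a path never exceeds its cost.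
-/

namespace LabelCover

variable {I : LabelCover}

theorem cost_eq_fixedSum_add_revenue (p : Pricing I) (es : List (Edge I.m I.k)) :
    I.cost p es = I.fixedSum es + I.revenue p es := by
  rw [cost, fixedSum, revenue, ← List.sum_map_add]
  rfl

theorem revenue_le_cost (p : Pricing I) (es : List (Edge I.m I.k)) :
    I.revenue p es ≤ I.cost p es := by
  rw [cost_eq_fixedSum_add_revenue]
  exact le_add_self

@[simp]
theorem cost_cons (p : Pricing I) (e : Edge I.m I.k) (es : List (Edge I.m I.k)) :
    I.cost p (e :: es) = I.edgeCost p e + I.cost p es := by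
  simp only [cost, List.map_cons, List.sum_cons]

theorem Walk.le_add_cost {p : Pricing I} {φ : Node I.m I.k → ℝ≥0∞}
    (hφ : ∀ e, I.EdgeOK e → φ e.dst ≤ φ e.src + I.edgeCost p e)
    {u v : Node I.m I.k} {es : List (Edge I.m I.k)} (hw : Walk I u v es) :
    φ v ≤ φ u + I.cost p es := by
  induction hw with
  | nil u => simp [cost]
  | @cons e _ es he _ ih =>
    calc φ _ ≤ φ e.dst + I.cost p es := ih
      _ ≤ φ e.src + I.edgeCost p e + I.cost p es := by gcongr; exact hφ e he
      _ = φ e.src + I.cost p (e :: es) := by rw [cost_cons, add_assoc]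

variable (I) in
def selectPricing (av : Fin I.m → Fin I.k × Fin I.k) : Pricing I :=
  fun i a => if a = av i then 2 else ⊤

variable (I) in
def selectedPath (av : Fin I.m → Fin I.k × Fin I.k) (n : ℕ) : List (Edge I.m I.k) :=
  if h : n < I.m then
    .enter ⟨n, h⟩ (av ⟨n, h⟩) :: .price ⟨n, h⟩ (av ⟨n, h⟩) ::
      .exit ⟨n, h⟩ (av ⟨n, h⟩) :: selectedPath av (n + 1)
  else []
termination_by I.m - n

section selectedPath

variable {av : Fin I.m → Fin I.k × Fin I.k}

theorem selectedPath_walk (hav : ∀ i, av i ∈ I.R i) (n : ℕ) (hn : n ≤ I.m) :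
    Walk I (.bd ⟨n, Nat.lt_succ_of_le hn⟩) I.target (I.selectedPath av n) := by
  rw [selectedPath]
  split_ifs with hlt
  · refine .cons (e := .enter ⟨n, hlt⟩ (av _)) (hav _) ?_
    refine .cons (e := .price ⟨n, hlt⟩ (av _)) (hav _) ?_
    exact .cons (e := .exit ⟨n, hlt⟩ (av _)) (hav _) (selectedPath_walk hav (n + 1) hlt)
  · obtain rfl : n = I.m := by omega
    exact .nil _
termination_by I.m - n

theorem price_mem_selectedPath (i : Fin I.m) {n : ℕ} (hn : n ≤ i) :
    Edge.price i (av i) ∈ I.selectedPath av n := by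
  have hlt : n < I.m := hn.trans_lt i.isLt
  rw [selectedPath, dif_pos hlt]
  rcases hn.eq_or_lt with rfl | hlt'
  · simp
  · have ih := price_mem_selectedPath i hlt'
    simp [ih]
termination_by I.m - n

theorem fixedSum_selectedPath (n : ℕ) : I.fixedSum (I.selectedPath av n) = 0 := by
  rw [selectedPath]
  split_ifs
  · have ih := fixedSum_selectedPath (n + 1)
    simp only [fixedSum] at ih
    simp [fixedSum, Edge.fixedCost, ih]
  · simp [fixedSum]
termination_by I.m - n

theorem revenue_selectedPath (n : ℕ) :
    I.revenue (I.selectPricing av) (I.selectedPath av n) = 2 * ((I.m - n : ℕ) : ℝ≥0∞) := by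
  rw [selectedPath]
  split_ifs with hlt
  · have ih := revenue_selectedPath (n + 1)
    simp only [revenue, List.map_cons, List.sum_cons, priceOf, selectPricing] at ih ⊢
    rw [ih, show I.m - n = I.m - (n + 1) + 1 by omega]
    push_cast
    ring
  · simp [revenue, show I.m - n = 0 by omega]
termination_by I.m - n

theorem cost_selectedPath (n : ℕ) :
    I.cost (I.selectPricing av) (I.selectedPath av n) = 2 * ((I.m - n : ℕ) : ℝ≥0∞) := by
  rw [cost_eq_fixedSum_add_revenue, fixedSum_selectedPath, revenue_selectedPath, zero_add]

end selectedPath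

variable (I) in
noncomputable def selectPotential (av : Fin I.m → Fin I.k × Fin I.k) :
    Node I.m I.k → ℝ≥0∞
  | .bd i => 2 * (i : ℕ)
  | .tl i a => if a = av i then 2 * (i : ℕ) else 0
  | .hd i a => if a = av i then 2 * (i : ℕ) + 2 else ⊤

theorem selectPotential_le_add_edgeCost {av : Fin I.m → Fin I.k × Fin I.k}
    (hav : ∀ i j, ¬ I.EdgeOK (.shortcut i j (av i) (av j)))
    (e : Edge I.m I.k) (he : I.EdgeOK e) :
    I.selectPotential av e.dst ≤
      I.selectPotential av e.src + I.edgeCost (I.selectPricing av) e := by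
  cases e with
  | enter i a =>
    simp only [Edge.src, Edge.dst, selectPotential, Fin.val_castSucc]
    split_ifs <;> simp
  | price i a =>
    simp only [Edge.src, Edge.dst, selectPotential, edgeCost, Edge.fixedCost, priceOf,
      selectPricing]
    split_ifs <;> simp
  | exit i a =>
    simp only [Edge.src, Edge.dst, selectPotential, edgeCost, Edge.fixedCost, priceOf,
      Fin.val_succ]
    split_ifs
    · push_cast
      exact le_of_eq (by ring)
    · simp
  | skip i =>
    simp only [Edge.src, Edge.dst, selectPotential, edgeCost, Edge.fixedCost, priceOf,
      Fin.val_succ, Fin.val_castSucc]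
    push_cast
    exact le_of_eq (by ring)
  | shortcut i j a b =>
    simp only [Edge.src, Edge.dst, selectPotential]
    split_ifs with hb ha
    · exact absurd he (ha ▸ hb ▸ hav i j)
    all_goals simp

theorem two_mul_le_cost {av : Fin I.m → Fin I.k × Fin I.k}
    (hav : ∀ i j, ¬ I.EdgeOK (.shortcut i j (av i) (av j)))
    {Q : List (Edge I.m I.k)} (hQ : Walk I I.source I.target Q) :
    2 * (I.m : ℝ≥0∞) ≤ I.cost (I.selectPricing av) Q := by
  simpa [selectPotential, source, target] using
    hQ.le_add_cost (selectPotential_le_add_edgeCost hav)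

theorem not_edgeOK_shortcut_of_labels (ℓv : I.V → Fin I.k) (ℓw : I.W → Fin I.k)
    (i j : Fin I.m) :
    ¬ I.EdgeOK (.shortcut i j (ℓv (I.ve i), ℓw (I.we i)) (ℓv (I.ve j), ℓw (I.we j))) := by
  rintro ⟨-, -, -, ⟨hv, hne⟩ | ⟨hw, hne⟩⟩
  · exact hne (congrArg ℓv hv)
  · exact hne (congrArg ℓw hw)

end LabelCover

/-- Completeness of the reduction. If the label assignment
`(ℓv, ℓw)` satisfies every edge of the label cover instance, then the pricing
setting `p (e_{i,κ,λ}) = 2` when `(κ,λ) = (ℓv v_i, ℓw w_i)` and `+∞` otherwise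
yields revenue exactly `2m`: there is a minimum-cost `s`-`t` path using the
priced-2 pricable edge in every one of the `m` gadgets, of revenue `2m`, and no
minimum-cost path has larger revenue. -/
theorem stackSP_completeness (I : LabelCover)
    (ℓv : I.V → Fin I.k) (ℓw : I.W → Fin I.k)
    (hsat : ∀ i, I.Sat ℓv ℓw i)
    (p : Pricing I)
    (hp : ∀ (i : Fin I.m) (a : Fin I.k × Fin I.k),
      p i a = if a = (ℓv (I.ve i), ℓw (I.we i)) then 2 else ⊤) :
    ∃ P : List (Edge I.m I.k),
      I.IsOptPath p P ∧
      I.revenue p P = 2 * (I.m : ℝ≥0∞) ∧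
      (∀ i : Fin I.m, Edge.price i (ℓv (I.ve i), ℓw (I.we i)) ∈ P) ∧
      (∀ Q, I.IsOptPath p Q → I.revenue p Q ≤ 2 * (I.m : ℝ≥0∞)) := by
  set av : Fin I.m → Fin I.k × Fin I.k := fun i => (ℓv (I.ve i), ℓw (I.we i))
  obtain rfl : p = I.selectPricing av := funext fun i => funext (hp i)
  have hwalk : Walk I I.source I.target (I.selectedPath av 0) :=
    selectedPath_walk hsat 0 (Nat.zero_le _)
  have hcost : I.cost (I.selectPricing av) (I.selectedPath av 0) = 2 * (I.m : ℝ≥0∞) := by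
    simpa using cost_selectedPath 0
  have hlower (Q) (hQ : Walk I I.source I.target Q) :
      2 * (I.m : ℝ≥0∞) ≤ I.cost (I.selectPricing av) Q :=
    two_mul_le_cost (not_edgeOK_shortcut_of_labels ℓv ℓw) hQ
  refine ⟨I.selectedPath av 0, ⟨hwalk, fun Q hQ => hcost ▸ hlower Q hQ⟩,
    by simpa using revenue_selectedPath 0, fun i => price_mem_selectedPath i (Nat.zero_le _),
    fun Q hQ => ?_⟩
  calc I.revenue _ Q ≤ I.cost _ Q := revenue_le_cost _ Q
    _ ≤ I.cost _ (I.selectedPath av 0) := hQ.2 _ hwalk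
    _ = 2 * (I.m : ℝ≥0∞) := hcost
end

section
/- Let G=(V,W,E) be a label cover instance with m edges and ℓ:V∪W→L a label assignment satisfying every edge. Under the pricing that sets p(e_{i,κ,λ})=2 when κ=ℓ(v_i) and λ=ℓ(w_i), and p(e_{i,κ,λ})=+∞ otherwise, every directed s-t path in the constructed StackSP instance that uses a shortcut edge contains a pricable edge of price +∞, i.e., no s-t path of finite cost uses a shortcut edge. -/
open scoped ENNReal

open LabelCover

/-! A shortcut edge of an `s`-`t` path can only be entered from the head of a
pricable edge `e_{i,a}` and only be left into the tail of a pricable edge `e_{j,b}`,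
so both lie on the path. Since `a` and `b` conflict, they cannot both agree with
the label assignment, so one of them is priced `+∞`. -/

namespace LabelCover

namespace Edge

variable {m k : ℕ}

theorem eq_price_of_dst_eq_hd {e : Edge m k} {i : Fin m} {a : Fin k × Fin k}
    (h : e.dst = .hd i a) : e = .price i a := by
  cases e <;> simp_all [dst]

theorem eq_price_of_src_eq_tl {e : Edge m k} {i : Fin m} {a : Fin k × Fin k}
    (h : e.src = .tl i a) : e = .price i a := by
  cases e <;> simp_all [src]

end Edge

theorem Conflict.ne_assignment_or_ne {I : LabelCover} {i j : Fin I.m}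
    {a b : Fin I.k × Fin I.k} (h : I.Conflict i j a b)
    (ℓv : I.V → Fin I.k) (ℓw : I.W → Fin I.k) :
    a ≠ (ℓv (I.ve i), ℓw (I.we i)) ∨ b ≠ (ℓv (I.ve j), ℓw (I.we j)) := by
  by_contra! hab
  obtain ⟨rfl, rfl⟩ := hab
  rcases h with ⟨hv, hne⟩ | ⟨hw, hne⟩
  · exact hne (congrArg ℓv hv)
  · exact hne (congrArg ℓw hw)

theorem cost_eq_top_of_price_mem (I : LabelCover) {p : Pricing I}
    {P : List (Edge I.m I.k)} {i : Fin I.m} {a : Fin I.k × Fin I.k}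
    (hmem : Edge.price i a ∈ P) (htop : p i a = ⊤) : I.cost p P = ⊤ := by
  have : I.edgeCost p (.price i a) ≤ I.cost p P :=
    List.single_le_sum (fun _ _ => zero_le) _ (List.mem_map_of_mem hmem)
  simpa [edgeCost, priceOf, htop] using this

namespace Walk

variable {I : LabelCover} {u v : Node I.m I.k} {P : List (Edge I.m I.k)}
  {e : Edge I.m I.k}

theorem edgeOK_of_mem (hP : Walk I u v P) (he : e ∈ P) : I.EdgeOK e := by
  induction hP with
  | nil => cases he
  | cons hok _ ih =>
    rcases List.mem_cons.1 he with rfl | he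
    · exact hok
    · exact ih he

theorem src_eq_or_exists_dst_eq (hP : Walk I u v P) (he : e ∈ P) :
    e.src = u ∨ ∃ e' ∈ P, e'.dst = e.src := by
  induction hP with
  | nil => cases he
  | cons _ _ ih =>
    rcases List.mem_cons.1 he with rfl | he
    · exact .inl rfl
    · rcases ih he with h | ⟨e', he', h⟩
      · exact .inr ⟨_, List.mem_cons_self, h.symm⟩
      · exact .inr ⟨e', List.mem_cons_of_mem _ he', h⟩

theorem dst_eq_or_exists_src_eq (hP : Walk I u v P) (he : e ∈ P) :
    e.dst = v ∨ ∃ e' ∈ P, e'.src = e.dst := by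
  induction hP with
  | nil => cases he
  | cons _ hrest ih =>
    rcases List.mem_cons.1 he with rfl | he
    · generalize e.dst = w at hrest ⊢
      cases hrest with
      | nil => exact .inl rfl
      | cons => exact .inr ⟨_, List.mem_cons_of_mem _ List.mem_cons_self, rfl⟩
    · rcases ih he with h | ⟨e', he', h⟩
      · exact .inl h
      · exact .inr ⟨e', List.mem_cons_of_mem _ he', h⟩

theorem price_mem_of_src_eq_hd {i : Fin I.m} {a : Fin I.k × Fin I.k}
    (hP : Walk I u v P) (he : e ∈ P) (hsrc : e.src = .hd i a) (hu : u ≠ .hd i a) :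
    Edge.price i a ∈ P := by
  rcases hP.src_eq_or_exists_dst_eq he with h | ⟨e', he', h⟩
  · exact absurd (h.symm.trans hsrc) hu
  · rwa [← Edge.eq_price_of_dst_eq_hd (h.trans hsrc)]

theorem price_mem_of_dst_eq_tl {i : Fin I.m} {a : Fin I.k × Fin I.k}
    (hP : Walk I u v P) (he : e ∈ P) (hdst : e.dst = .tl i a) (hv : v ≠ .tl i a) :
    Edge.price i a ∈ P := by
  rcases hP.dst_eq_or_exists_src_eq he with h | ⟨e', he', h⟩
  · exact absurd (h.symm.trans hdst) hv
  · rwa [← Edge.eq_price_of_src_eq_tl (h.trans hdst)]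

end Walk

end LabelCover

theorem stackSP_shortcut_path_infinite_general (I : LabelCover)
    (ℓv : I.V → Fin I.k) (ℓw : I.W → Fin I.k)
    (p : Pricing I)
    (hp : ∀ (i : Fin I.m) (a : Fin I.k × Fin I.k),
      p i a = if a = (ℓv (I.ve i), ℓw (I.we i)) then 2 else ⊤) :
    ∀ P : List (Edge I.m I.k), Walk I I.source I.target P →
      (∃ (g g' : Fin I.m) (a b : Fin I.k × Fin I.k), Edge.shortcut g g' a b ∈ P) →
      (∃ (g : Fin I.m) (a : Fin I.k × Fin I.k), Edge.price g a ∈ P ∧ p g a = ⊤) ∧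
      I.cost p P = ⊤ := by
  intro P hP ⟨g, g', a, b, hsc⟩
  obtain ⟨-, -, -, hconf⟩ := hP.edgeOK_of_mem hsc
  have hpa : Edge.price g a ∈ P :=
    hP.price_mem_of_src_eq_hd hsc rfl (by simp [source])
  have hpb : Edge.price g' b ∈ P :=
    hP.price_mem_of_dst_eq_tl hsc rfl (by simp [target])
  rcases hconf.ne_assignment_or_ne ℓv ℓw with h | h
  · have htop : p g a = ⊤ := by rw [hp, if_neg h]
    exact ⟨⟨g, a, hpa, htop⟩, I.cost_eq_top_of_price_mem hpa htop⟩
  · have htop : p g' b = ⊤ := by rw [hp, if_neg h]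
    exact ⟨⟨g', b, hpb, htop⟩, I.cost_eq_top_of_price_mem hpb htop⟩

/-- Under the pricing induced by a label assignment satisfying
every edge, every directed `s`-`t` path using a shortcut edge contains a
pricable edge of price `+∞`; in particular no `s`-`t` path of finite cost uses
a shortcut edge. -/
theorem stackSP_shortcut_path_infinite (I : LabelCover)
    (ℓv : I.V → Fin I.k) (ℓw : I.W → Fin I.k)
    (hsat : ∀ i, I.Sat ℓv ℓw i)
    (p : Pricing I)
    (hp : ∀ (i : Fin I.m) (a : Fin I.k × Fin I.k),
      p i a = if a = (ℓv (I.ve i), ℓw (I.we i)) then 2 else ⊤) :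
    ∀ P : List (Edge I.m I.k), Walk I I.source I.target P →
      (∃ (g g' : Fin I.m) (a b : Fin I.k × Fin I.k), Edge.shortcut g g' a b ∈ P) →
      (∃ (g : Fin I.m) (a : Fin I.k × Fin I.k), Edge.price g a ∈ P ∧ p g a = ⊤) ∧
      I.cost p P = ⊤ :=
  stackSP_shortcut_path_infinite_general I ℓv ℓw p hp
end

section
/- (Fact 1) Consider an island with start point σ_α and end point σ_ω in the island decomposition of the purchased minimum-cost s-t path P. Then P does not enter gadget σ_α via a shortcut edge and does not exit gadget σ_ω via a shortcut edge; equivalently in_α = 0 and out_ω = 0. -/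
open scoped ENNReal

open LabelCover

/-! ### Auxiliary lemmas -/

/-- Rank of a node: strictly increases along every edge. -/
def nodeRank {m k : ℕ} : Node m k → ℕ
  | .bd i => 3 * i
  | .tl i _ => 3 * i + 1
  | .hd i _ => 3 * i + 2

lemma edge_rank {I : LabelCover} {e : Edge I.m I.k} (h : I.EdgeOK e) :
    nodeRank e.src < nodeRank e.dst := by
  cases e <;>
    simp only [Edge.src, Edge.dst, nodeRank, EdgeOK, Fin.coe_castSucc, Fin.val_succ] at h ⊢ <;>
    omega

lemma walk_rank_le {I : LabelCover} {u v : Node I.m I.k} {es : List (Edge I.m I.k)}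
    (h : I.Walk u v es) : nodeRank u ≤ nodeRank v := by
  induction h with
  | nil => exact le_rfl
  | cons hok hw ih => exact le_of_lt (lt_of_lt_of_le (edge_rank hok) ih)

lemma walk_mem_ok {I : LabelCover} {u v : Node I.m I.k} {es : List (Edge I.m I.k)}
    (h : I.Walk u v es) {e : Edge I.m I.k} (he : e ∈ es) : I.EdgeOK e := by
  induction h with
  | nil => simp at he
  | cons hok hw ih =>
    rcases List.mem_cons.1 he with rfl | he
    · exact hok
    · exact ih he

lemma walk_src_le {I : LabelCover} {u v : Node I.m I.k} {es : List (Edge I.m I.k)}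
    (h : I.Walk u v es) {e : Edge I.m I.k} (he : e ∈ es) : nodeRank u ≤ nodeRank e.src := by
  induction h with
  | nil => simp at he
  | @cons f w fs hok hw ih =>
    rcases List.mem_cons.1 he with rfl | he
    · exact le_rfl
    · exact le_of_lt (lt_of_lt_of_le (edge_rank hok) (ih he))

lemma walk_order {I : LabelCover} {u v : Node I.m I.k} {es : List (Edge I.m I.k)}
    (h : I.Walk u v es) {e e' : Edge I.m I.k} (he : e ∈ es) (he' : e' ∈ es) (hne : e ≠ e') :
    nodeRank e.dst ≤ nodeRank e'.src ∨ nodeRank e'.dst ≤ nodeRank e.src := by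
  induction h with
  | nil => simp at he
  | @cons f w fs hok hw ih =>
    rcases List.mem_cons.1 he with h0 | h0
    · rcases List.mem_cons.1 he' with h1 | h1
      · exact absurd (h0.trans h1.symm) hne
      · exact Or.inl (by rw [h0]; exact walk_src_le hw h1)
    · rcases List.mem_cons.1 he' with h1 | h1
      · exact Or.inr (by rw [h1]; exact walk_src_le hw h0)
      · exact ih h0 h1

lemma walk_nil_inv {I : LabelCover} {u v : Node I.m I.k} (h : I.Walk u v []) : u = v := by
  cases h; rfl

lemma walk_cons_inv {I : LabelCover} {u v : Node I.m I.k} {e : Edge I.m I.k}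
    {es : List (Edge I.m I.k)} (h : I.Walk u v (e :: es)) :
    e.src = u ∧ I.EdgeOK e ∧ I.Walk e.dst v es := by
  cases h with
  | cons hok hw => exact ⟨rfl, hok, hw⟩

lemma walk_succ {I : LabelCover} {u v : Node I.m I.k} {es : List (Edge I.m I.k)}
    (h : I.Walk u v es) {e : Edge I.m I.k} (he : e ∈ es) (hne : e.dst ≠ v) :
    ∃ e' ∈ es, e'.src = e.dst := by
  induction es generalizing u with
  | nil => simp at he
  | cons f fs ih =>
    obtain ⟨hsrc, hok, hw⟩ := walk_cons_inv h
    rcases List.mem_cons.1 he with h0 | h0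
    · cases fs with
      | nil => exact absurd (by rw [h0]; exact walk_nil_inv hw) hne
      | cons e' fs' =>
        exact ⟨e', by simp, by rw [h0]; exact (walk_cons_inv hw).1⟩
    · obtain ⟨e', h1, h2⟩ := ih hw h0
      exact ⟨e', by simp [h1], h2⟩

lemma walk_pred {I : LabelCover} {u v : Node I.m I.k} {es : List (Edge I.m I.k)}
    (h : I.Walk u v es) {e : Edge I.m I.k} (he : e ∈ es) (hne : e.src ≠ u) :
    ∃ e' ∈ es, e'.dst = e.src := by
  induction h with
  | nil => simp at he
  | @cons f w fs hok hw ih =>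
    rcases List.mem_cons.1 he with rfl | he
    · exact absurd rfl hne
    · by_cases hd : e.src = f.dst
      · exact ⟨f, by simp, hd.symm⟩
      · obtain ⟨e', h1, h2⟩ := ih he hd
        exact ⟨e', by simp [h1], h2⟩

lemma src_tl {m k : ℕ} {e : Edge m k} {g : Fin m} {b : Fin k × Fin k}
    (h : e.src = Node.tl g b) : e = Edge.price g b := by
  cases e <;> simp_all [Edge.src]

lemma dst_hd {m k : ℕ} {e : Edge m k} {g : Fin m} {a : Fin k × Fin k}
    (h : e.dst = Node.hd g a) : e = Edge.price g a := by
  cases e <;> simp_all [Edge.dst]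

lemma price_unique {I : LabelCover} {u v : Node I.m I.k} {es : List (Edge I.m I.k)}
    (h : I.Walk u v es) {g : Fin I.m} {a a' : Fin I.k × Fin I.k}
    (h1 : Edge.price g a ∈ es) (h2 : Edge.price g a' ∈ es) : a = a' := by
  by_contra hne
  have := walk_order h h1 h2 (by simp [hne])
  simp [Edge.src, Edge.dst, nodeRank] at this

/-- Fact 1: For an island with start point `σ α` and end point
`σ ω` in the island decomposition of the purchased minimum-cost `s`-`t` path
`P`, the path `P` does not enter gadget `σ α` via a shortcut edge and does not
exit gadget `σ ω` via a shortcut edge; equivalently `in_α = 0` and `out_ω = 0`. -/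
theorem stackSP_fact1 (I : LabelCover) (p : Pricing I) (P : List (Edge I.m I.k))
    (hP : I.IsPurchased p P) (hoff : I.OffPathInfty p P)
    (S : I.SigSeq P) (α ω : Fin S.r) (hisl : S.IsIsland α ω) :
    (¬ ∃ (g : Fin I.m) (a b : Fin I.k × Fin I.k), Edge.shortcut g (S.σ α) a b ∈ P) ∧
    (¬ ∃ (g : Fin I.m) (a b : Fin I.k × Fin I.k), Edge.shortcut (S.σ ω) g a b ∈ P) ∧
    I.inLen P (S.σ α) = 0 ∧ I.outLen P (S.σ ω) = 0 := by
  obtain ⟨hαω, hstart, hend, hmid⟩ := hisl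
  have hwalk : I.Walk I.source I.target P := hP.1.1
  have hin : ¬ ∃ (g : Fin I.m) (a b : Fin I.k × Fin I.k),
      Edge.shortcut g (S.σ α) a b ∈ P := by
    rintro ⟨g, a, b, hmem⟩
    have hok : I.EdgeOK (.shortcut g (S.σ α) a b) := walk_mem_ok hwalk hmem
    have hglt : (g : ℕ) < (S.σ α : ℕ) := hok.1
    have hsucc : Edge.price (S.σ α) b ∈ P := by
      obtain ⟨e', he'mem, he'src⟩ := walk_succ hwalk hmem
        (by simp [LabelCover.target, Edge.dst])
      have := src_tl (e := e') (g := S.σ α) (b := b) he'src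
      rwa [this] at he'mem
    have hprev : Edge.price g a ∈ P := by
      obtain ⟨e', he'mem, he'dst⟩ := walk_pred hwalk hmem
        (by simp [LabelCover.source, Edge.src])
      have := dst_hd (e := e') (g := g) (a := a) he'dst
      rwa [this] at he'mem
    rcases hstart with h0 | ⟨hpos, h1, hend'⟩
    · have hα : α = ⟨0, S.rpos⟩ := Fin.ext h0
      have hle := S.first g ⟨a, hprev⟩
      rw [← hα] at hle
      exact absurd hglt (not_lt.2 (Fin.le_def.mp hle))
    · set αp : Fin S.r := ⟨(α : ℕ) - 1, h1⟩ with hαp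
      have hlt : αp < α := by
        rw [hαp, Fin.lt_def]
        exact Nat.sub_lt hpos one_pos
      have hαeq : (⟨(α : ℕ) - 1 + 1, by omega⟩ : Fin S.r) = α := Fin.ext (show (α : ℕ) - 1 + 1 = (α : ℕ) by omega)
      have hstep := S.step ((α : ℕ) - 1) (by omega)
      rcases hstep with ⟨hl, _⟩ | ⟨hnl, hpe, hmin⟩
      · exact hend' ⟨S.σ ⟨(α : ℕ) - 1 + 1, by omega⟩, hl⟩
      · have hg_le : (g : ℕ) ≤ (S.σ αp : ℕ) := by
          by_contra hgt
          have := hmin g (by rw [Fin.lt_def]; exact Nat.lt_of_not_le hgt) ⟨a, hprev⟩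
          rw [hαeq] at this
          exact absurd hglt (by have := Fin.le_def.1 this; omega)
        rcases Nat.lt_or_ge (g : ℕ) (S.σ αp : ℕ) with hcase | hcase
        · -- g strictly before σ αp : order contradiction
          have horder := walk_order hwalk hmem (S.mem αp) (by simp)
          have hmono : (S.σ αp : ℕ) < (S.σ α : ℕ) := S.mono hlt
          simp only [Edge.src, Edge.dst, nodeRank] at horder
          omega
        · -- g = σ αp
          have hgeq : g = S.σ αp := Fin.ext (by omega)
          have ha : a = S.lab αp := by
            rw [hgeq] at hprev
            exact price_unique hwalk hprev (S.mem αp)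
          apply hend'
          refine ⟨S.σ α, b, hsucc, ?_⟩
          rw [← hgeq, ← ha]
          exact hok
  have hout : ¬ ∃ (g : Fin I.m) (a b : Fin I.k × Fin I.k),
      Edge.shortcut (S.σ ω) g a b ∈ P := by
    rintro ⟨g, a, b, hmem⟩
    have hok : I.EdgeOK (.shortcut (S.σ ω) g a b) := walk_mem_ok hwalk hmem
    have hprev : Edge.price (S.σ ω) a ∈ P := by
      obtain ⟨e', he'mem, he'dst⟩ := walk_pred hwalk hmem
        (by simp [LabelCover.source, Edge.src])
      have := dst_hd (e := e') (g := S.σ ω) (a := a) he'dst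
      rwa [this] at he'mem
    have hsucc : Edge.price g b ∈ P := by
      obtain ⟨e', he'mem, he'src⟩ := walk_succ hwalk hmem
        (by simp [LabelCover.target, Edge.dst])
      have := src_tl (e := e') (g := g) (b := b) he'src
      rwa [this] at he'mem
    have ha : a = S.lab ω := price_unique hwalk hprev (S.mem ω)
    exact hend ⟨g, b, hsucc, by rw [← ha]; exact hok⟩
  exact ⟨hin, hout, by rw [LabelCover.inLen, dif_neg hin],
    by rw [LabelCover.outLen, dif_neg hout]⟩
end

section
/- Let σ_α,…,σ_ω be an island of significant gadgets for the purchased minimum-cost s-t path P, and for α ≤ i ≤ ω−1 let ℓ_i be the length of the shortcut edge between the P-edges of σ_i and σ_{i+1}, and let r_i and c_i be the price part and fixed-cost part of the cost of P between the shortcut exiting σ_i and the shortcut entering σ_{i+1}. Then for all α ≤ i ≤ ω−1, out_i + r_i + c_i + in_{i+1} ≤ ℓ_i; in particular r_i ≤ ℓ_i − out_i − in_{i+1}. -/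
open scoped ENNReal

open LabelCover

/-! Replacing the segment of `P` from the head of the P-edge of `σ i` to the tail of the P-edge of
`σ (i+1)` by the shortcut edge joining them gives another `s`-`t` path, costing `ℓ_i` on that
segment. Since `P` has minimum and finite cost, the segment, of cost `out_i + r_i + c_i + in_{i+1}`,
costs at most `ℓ_i`. -/

namespace LabelCover

variable {I : LabelCover}

theorem Walk.append {u v w : Node I.m I.k} {es fs : List (Edge I.m I.k)}
    (h₁ : Walk I u v es) (h₂ : Walk I v w fs) : Walk I u w (es ++ fs) := by
  induction h₁ with
  | nil => simpa using h₂
  | cons hok _ ih => exact .cons hok (ih h₂)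

theorem Walk.single {e : Edge I.m I.k} (he : I.EdgeOK e) : Walk I e.src e.dst [e] :=
  .cons he (.nil _)

@[simp]
theorem cost_nil (p : Pricing I) : I.cost p [] = 0 := rfl

@[simp]
theorem cost_append (p : Pricing I) (es fs : List (Edge I.m I.k)) :
    I.cost p (es ++ fs) = I.cost p es + I.cost p fs := by
  simp [cost]

theorem cost_shortcut (p : Pricing I) (g g' : Fin I.m) (a b : Fin I.k × Fin I.k) :
    I.cost p [.shortcut g g' a b] = (((g' : ℕ) - (g : ℕ) - 1 : ℕ) : ℝ≥0∞) := by
  simp [edgeCost, Edge.fixedCost, priceOf]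

/-- Witness: the fixed-cost edges of the remaining gadgets. -/
theorem exists_walk_target_cost_ne_top (p : Pricing I) (j : Fin (I.m + 1)) :
    ∃ es, Walk I (.bd j) I.target es ∧ I.cost p es ≠ ⊤ := by
  induction j using Fin.reverseInduction with
  | last => exact ⟨[], .nil _, by simp⟩
  | cast g ih =>
    obtain ⟨es, hw, hc⟩ := ih
    refine ⟨.skip g :: es, .cons (e := .skip g) trivial hw, ?_⟩
    simpa [edgeCost, Edge.fixedCost, priceOf] using hc

theorem IsOptPath.cost_ne_top {p : Pricing I} {P : List (Edge I.m I.k)} (hP : I.IsOptPath p P) :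
    I.cost p P ≠ ⊤ := by
  obtain ⟨es, hw, hc⟩ := exists_walk_target_cost_ne_top p 0
  exact ne_top_of_le_ne_top hc (hP.2 es hw)

theorem IsOptPath.cost_segment_le {p : Pricing I} {P P₁ M P₂ Q : List (Edge I.m I.k)}
    {u v : Node I.m I.k} (hP : I.IsOptPath p P) (hsplit : I.SplitsAt P P₁ M P₂ u v)
    (hQ : Walk I u v Q) : I.cost p M ≤ I.cost p Q := by
  obtain ⟨rfl, hw₁, -, hw₂⟩ := hsplit
  have hfin := hP.cost_ne_top
  have hle := hP.2 _ ((hw₁.append hQ).append hw₂)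
  simp only [cost_append] at hfin hle
  have h₁ : I.cost p P₁ ≠ ⊤ := fun h => hfin (by simp [h])
  have h₂ : I.cost p P₂ ≠ ⊤ := fun h => hfin (by simp [h])
  exact (ENNReal.add_le_add_iff_left h₁).mp ((ENNReal.add_le_add_iff_right h₂).mp hle)

end LabelCover

open LabelCover

theorem stackSP_eqn1_general (I : LabelCover) (p : Pricing I) (P : List (Edge I.m I.k))
    (hP : I.IsPurchased p P)
    (S : I.SigSeq P)
    (i i1 : Fin S.r)
    (hlink : I.EdgeOK (Edge.shortcut (S.σ i) (S.σ i1) (S.lab i) (S.lab i1)))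
    (P1 Mout Mid Min P2 : List (Edge I.m I.k)) (out inn : ℕ)
    (hsplit : I.SplitsAt P P1 (Mout ++ Mid ++ Min) P2
      (Node.hd (S.σ i) (S.lab i)) (Node.tl (S.σ i1) (S.lab i1)))
    (hout : (Mout = [] ∧ out = 0 ∧
        ¬ ∃ (g : Fin I.m) (b : Fin I.k × Fin I.k),
          Edge.shortcut (S.σ i) g (S.lab i) b ∈ P) ∨
      (∃ (g : Fin I.m) (b : Fin I.k × Fin I.k),
        Mout = [Edge.shortcut (S.σ i) g (S.lab i) b] ∧
        out = (g : ℕ) - ((S.σ i : Fin I.m) : ℕ) - 1))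
    (hinn : (Min = [] ∧ inn = 0 ∧
        ¬ ∃ (g : Fin I.m) (a : Fin I.k × Fin I.k),
          Edge.shortcut g (S.σ i1) a (S.lab i1) ∈ P) ∨
      (∃ (g : Fin I.m) (a : Fin I.k × Fin I.k),
        Min = [Edge.shortcut g (S.σ i1) a (S.lab i1)] ∧
        inn = ((S.σ i1 : Fin I.m) : ℕ) - (g : ℕ) - 1))
    (ri ci ℓi : ℝ≥0∞)
    (hri : ri = I.revenue p Mid) (hci : ci = I.fixedSum Mid)
    (hℓi : ℓi = ((((S.σ i1 : Fin I.m) : ℕ) - ((S.σ i : Fin I.m) : ℕ) - 1 : ℕ) : ℝ≥0∞)) :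
    (out : ℝ≥0∞) + ri + ci + (inn : ℝ≥0∞) ≤ ℓi ∧
    ri ≤ ℓi - (out : ℝ≥0∞) - (inn : ℝ≥0∞) := by
  have hseg := hP.1.cost_segment_le hsplit (Walk.single hlink)
  have hMout : I.cost p Mout = out := by
    rcases hout with ⟨rfl, rfl, -⟩ | ⟨g, b, rfl, rfl⟩
    exacts [by simp, cost_shortcut p _ _ _ _]
  have hMin : I.cost p Min = inn := by
    rcases hinn with ⟨rfl, rfl, -⟩ | ⟨g, a, rfl, rfl⟩
    exacts [by simp, cost_shortcut p _ _ _ _]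
  rw [cost_shortcut, ← hℓi, cost_append, cost_append, hMout, hMin,
    cost_eq_fixedSum_add_revenue, ← hri, ← hci] at hseg
  have hmain : (out : ℝ≥0∞) + ri + ci + inn ≤ ℓi := by
    calc (out : ℝ≥0∞) + ri + ci + inn = out + (ci + ri) + inn := by ring
      _ ≤ ℓi := hseg
  refine ⟨hmain, ?_⟩
  rw [tsub_tsub]
  refine ENNReal.le_sub_of_add_le_left (by simp) ?_
  calc (out : ℝ≥0∞) + inn + ri = out + ri + 0 + inn := by ring
    _ ≤ out + ri + ci + inn := by gcongr; positivity
    _ ≤ ℓi := hmain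

/-- inequality (1): Let `σ α, …, σ ω` be an island of significant
gadgets for the purchased minimum-cost `s`-`t` path `P`, let `α ≤ i ≤ ω - 1`
(with `i1 = i + 1`), let `ℓ_i` be the length of the shortcut edge between the
P-edges of `σ i` and `σ i1`, and let `r_i` and `c_i` be the price part and the
fixed-cost part of the cost of `P` between the shortcut `out_i` exiting `σ i`
and the shortcut `in_{i+1}` entering `σ i1` (the relevant segment `Mid` of `P`
runs between the optional exiting shortcut `Mout` and the optional entering
shortcut `Min`). Then `out_i + r_i + c_i + in_{i+1} ≤ ℓ_i`, and in particular
`r_i ≤ ℓ_i - out_i - in_{i+1}`. -/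
theorem stackSP_eqn1 (I : LabelCover) (p : Pricing I) (P : List (Edge I.m I.k))
    (hP : I.IsPurchased p P) (hoff : I.OffPathInfty p P)
    (S : I.SigSeq P) (α ω : Fin S.r) (hisl : S.IsIsland α ω)
    (i i1 : Fin S.r) (hαi : α ≤ i) (hi1 : (i1 : ℕ) = (i : ℕ) + 1) (hiω : i1 ≤ ω)
    (hlink : I.EdgeOK (Edge.shortcut (S.σ i) (S.σ i1) (S.lab i) (S.lab i1)))
    (P1 Mout Mid Min P2 : List (Edge I.m I.k)) (out inn : ℕ)
    (hsplit : I.SplitsAt P P1 (Mout ++ Mid ++ Min) P2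
      (Node.hd (S.σ i) (S.lab i)) (Node.tl (S.σ i1) (S.lab i1)))
    (hout : (Mout = [] ∧ out = 0 ∧
        ¬ ∃ (g : Fin I.m) (b : Fin I.k × Fin I.k),
          Edge.shortcut (S.σ i) g (S.lab i) b ∈ P) ∨
      (∃ (g : Fin I.m) (b : Fin I.k × Fin I.k),
        Mout = [Edge.shortcut (S.σ i) g (S.lab i) b] ∧
        out = (g : ℕ) - ((S.σ i : Fin I.m) : ℕ) - 1))
    (hinn : (Min = [] ∧ inn = 0 ∧
        ¬ ∃ (g : Fin I.m) (a : Fin I.k × Fin I.k),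
          Edge.shortcut g (S.σ i1) a (S.lab i1) ∈ P) ∨
      (∃ (g : Fin I.m) (a : Fin I.k × Fin I.k),
        Min = [Edge.shortcut g (S.σ i1) a (S.lab i1)] ∧
        inn = ((S.σ i1 : Fin I.m) : ℕ) - (g : ℕ) - 1))
    (ri ci ℓi : ℝ≥0∞)
    (hri : ri = I.revenue p Mid) (hci : ci = I.fixedSum Mid)
    (hℓi : ℓi = ((((S.σ i1 : Fin I.m) : ℕ) - ((S.σ i : Fin I.m) : ℕ) - 1 : ℕ) : ℝ≥0∞)) :
    (out : ℝ≥0∞) + ri + ci + (inn : ℝ≥0∞) ≤ ℓi ∧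
    ri ≤ ℓi - (out : ℝ≥0∞) - (inn : ℝ≥0∞) :=
  stackSP_eqn1_general I p P hP S i i1 hlink P1 Mout Mid Min P2 out inn hsplit hout hinn ri ci ℓi
    hri hci hℓi
end
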